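/- Let e ∈ A be an idempotent (e² = e). The Chern character chain ch(e) = tr(e) + Σ_{n≥1} (-1)ⁿ (2n)!/n! · tr((e - 1/2)(de de)ⁿ) is a cycle for the total boundary b + B: for all n ≥ 0, b(ch(e)_{2n+2}) + B(ch(e)_{2n}) = 0, where ch(e)_{2n} denotes the component in Ω^{2n}A. -/

import Mathlib

/-!
Since `e² = e`, Leibniz gives `de = de·e + e·de`: right multiplication by `de` turns forms
commuting with `e` into forms `x` with `e x + x e = x`, and vice versa. Hence `(de)^{2n}`
commutes with `e` and `(de)^{2n+1}` is `d`-closed and `b`-closed, so the Karoubi operator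
fixes it. Consequently `B((e - ½)(de)^{2n}) = (2n+1)(de)^{2n+1}` and
`b((e - ½)(de)^{2n+2}) = ½(de)^{2n+1}`, and the normalisations `cₙ = (-1)ⁿ(2n)!/n!`
(with `c₀ = 1`, which also covers `B(e) = de`) satisfy exactly `c_{n+1}/2 + (2n+1)cₙ = 0`.
-/

section Forms

variable {R A : Type*} [CommRing R] {Ω : ℕ → Type*}
  [∀ n, AddCommGroup (Ω n)] [∀ n, Module R (Ω n)]

def dePow (one : Ω 0) (mulda : ∀ n, A → Ω n →ₗ[R] Ω (n + 1)) (e : A) : ∀ j, Ω j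
  | 0 => one
  | j + 1 => mulda j e (dePow one mulda e j)

variable {ι : A → Ω 0} {one : Ω 0} {d : ∀ n, Ω n →ₗ[R] Ω (n + 1)}
  {b : ∀ n, Ω (n + 1) →ₗ[R] Ω n} {mulda : ∀ n, A → Ω n →ₗ[R] Ω (n + 1)}
  {ra la : ∀ n, A → Ω n →ₗ[R] Ω n} {k : ∀ n, Ω n →ₗ[R] Ω n} {e : A}

theorem la_add_ra_mulda_of_la_eq_ra [Mul A] (he : e * e = e)
    (h_ra_mulda : ∀ n (a a' : A) (ω : Ω n),
      ra (n + 1) a' (mulda n a ω) = mulda n (a * a') ω - mulda n a' (ra n a ω))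
    (h_la_mulda : ∀ n (a a' : A) (ω : Ω n),
      la (n + 1) a' (mulda n a ω) = mulda n a (la n a' ω))
    {n : ℕ} {ω : Ω n} (h : la n e ω = ra n e ω) :
    la (n + 1) e (mulda n e ω) + ra (n + 1) e (mulda n e ω) = mulda n e ω := by
  rw [h_la_mulda, h_ra_mulda, he, h]
  abel

theorem la_mulda_eq_ra_of_la_add_ra [Mul A] (he : e * e = e)
    (h_ra_mulda : ∀ n (a a' : A) (ω : Ω n),
      ra (n + 1) a' (mulda n a ω) = mulda n (a * a') ω - mulda n a' (ra n a ω))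
    (h_la_mulda : ∀ n (a a' : A) (ω : Ω n),
      la (n + 1) a' (mulda n a ω) = mulda n a (la n a' ω))
    {n : ℕ} {ω : Ω n} (h : la n e ω + ra n e ω = ω) :
    la (n + 1) e (mulda n e ω) = ra (n + 1) e (mulda n e ω) := by
  rw [h_la_mulda, h_ra_mulda, he, eq_sub_of_add_eq h, map_sub]

theorem dePow_parity [Mul A] (he : e * e = e)
    (h_one_r : ∀ a : A, ra 0 a one = ι a) (h_one_l : ∀ a : A, la 0 a one = ι a)
    (h_ra_mulda : ∀ n (a a' : A) (ω : Ω n),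
      ra (n + 1) a' (mulda n a ω) = mulda n (a * a') ω - mulda n a' (ra n a ω))
    (h_la_mulda : ∀ n (a a' : A) (ω : Ω n),
      la (n + 1) a' (mulda n a ω) = mulda n a (la n a' ω))
    (m : ℕ) :
    la (2 * m) e (dePow one mulda e (2 * m)) = ra (2 * m) e (dePow one mulda e (2 * m)) ∧
      la (2 * m + 1) e (dePow one mulda e (2 * m + 1)) +
        ra (2 * m + 1) e (dePow one mulda e (2 * m + 1)) = dePow one mulda e (2 * m + 1) := by
  induction m with
  | zero =>
    have h_one : la 0 e one = ra 0 e one := by rw [h_one_l, h_one_r]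
    exact ⟨h_one, la_add_ra_mulda_of_la_eq_ra he h_ra_mulda h_la_mulda h_one⟩
  | succ m ih =>
    have h_even := la_mulda_eq_ra_of_la_add_ra he h_ra_mulda h_la_mulda ih.2
    exact ⟨h_even, la_add_ra_mulda_of_la_eq_ra he h_ra_mulda h_la_mulda h_even⟩

theorem d_dePow (h_d_one : d 0 one = 0)
    (h_d : ∀ n (a : A) (ω : Ω n), d (n + 1) (mulda n a ω) = mulda (n + 1) a (d n ω)) :
    ∀ j, d j (dePow one mulda e j) = 0
  | 0 => h_d_one
  | j + 1 => by rw [dePow, h_d, d_dePow h_d_one h_d j, map_zero]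

theorem b_mulda_eq_zero_of_la_eq_ra
    (h_b : ∀ n (a : A) (ω : Ω n),
      b n (mulda n a ω) = ((-1 : R) ^ n) • (ra n a ω - la n a ω))
    {n : ℕ} {a : A} {ω : Ω n} (h : la n a ω = ra n a ω) :
    b n (mulda n a ω) = 0 := by
  rw [h_b, h, sub_self, smul_zero]

theorem karoubi_mulda_eq_self
    (hk : ∀ n (ω : Ω (n + 1)), k (n + 1) ω = ω - b (n + 1) (d (n + 1) ω) - d n (b n ω))
    (h_d : ∀ n (a : A) (ω : Ω n), d (n + 1) (mulda n a ω) = mulda (n + 1) a (d n ω))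
    (h_b : ∀ n (a : A) (ω : Ω n),
      b n (mulda n a ω) = ((-1 : R) ^ n) • (ra n a ω - la n a ω))
    {n : ℕ} {a : A} {ω : Ω n} (hdω : d n ω = 0) (h : la n a ω = ra n a ω) :
    k (n + 1) (mulda n a ω) = mulda n a ω := by
  rw [hk, h_d, hdω, b_mulda_eq_zero_of_la_eq_ra h_b h]
  simp only [map_zero, sub_zero]

theorem connesB_eq_nsmul {B : ∀ n, Ω n →ₗ[R] Ω (n + 1)}
    (hB : ∀ n (ω : Ω n), B n ω = ∑ i ∈ Finset.range (n + 1), (⇑(k (n + 1)))^[i] (d n ω))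
    {n : ℕ} {ω : Ω n} (h : k (n + 1) (d n ω) = d n ω) :
    B n ω = (n + 1) • d n ω := by
  simp only [hB, Function.iterate_fixed h, Finset.sum_const, Finset.card_range]

end Forms

section Chern

variable {𝕜 A : Type*} [Field 𝕜] {Ω : ℕ → Type*}
  [∀ n, AddCommGroup (Ω n)] [∀ n, Module 𝕜 (Ω n)]
  {ι : A → Ω 0} {one : Ω 0} {d : ∀ n, Ω n →ₗ[𝕜] Ω (n + 1)}
  {b : ∀ n, Ω (n + 1) →ₗ[𝕜] Ω n} {mulda : ∀ n, A → Ω n →ₗ[𝕜] Ω (n + 1)}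
  {ra la : ∀ n, A → Ω n →ₗ[𝕜] Ω n} {e : A}
  {w : ∀ m, Ω m}

theorem eq_la_dePow_sub_half (hw0 : w 0 = ι e - (2 : 𝕜)⁻¹ • one)
    (hwsucc : ∀ m, w (m + 1) = mulda m e (w m)) (h_one_l : ∀ a : A, la 0 a one = ι a)
    (h_la_mulda : ∀ n (a a' : A) (ω : Ω n),
      la (n + 1) a' (mulda n a ω) = mulda n a (la n a' ω)) :
    ∀ j, w j = la j e (dePow one mulda e j) - (2 : 𝕜)⁻¹ • dePow one mulda e j
  | 0 => by rw [hw0, dePow, h_one_l]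
  | j + 1 => by
    rw [hwsucc, eq_la_dePow_sub_half hw0 hwsucc h_one_l h_la_mulda j, map_sub, map_smul, dePow,
      h_la_mulda]

theorem d_eq_dePow_succ (hw0 : w 0 = ι e - (2 : 𝕜)⁻¹ • one)
    (hwsucc : ∀ m, w (m + 1) = mulda m e (w m)) (h_d0 : ∀ a : A, d 0 (ι a) = mulda 0 a one)
    (h_d_one : d 0 one = 0)
    (h_d : ∀ n (a : A) (ω : Ω n), d (n + 1) (mulda n a ω) = mulda (n + 1) a (d n ω)) :
    ∀ j, d j (w j) = dePow one mulda e (j + 1)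
  | 0 => by rw [hw0, map_sub, map_smul, h_d0, h_d_one, smul_zero, sub_zero]; rfl
  | j + 1 => by rw [hwsucc, h_d, d_eq_dePow_succ hw0 hwsucc h_d0 h_d_one h_d j]; rfl

theorem b_mulda_la_sub_half [Mul A] [NeZero (2 : 𝕜)] (he : e * e = e)
    (h_ll : ∀ n (a a' : A) (ω : Ω n), la n a (la n a' ω) = la n (a' * a) ω)
    (h_rl : ∀ n (a a' : A) (ω : Ω n), ra n a' (la n a ω) = la n a (ra n a' ω))
    (h_b : ∀ n (a : A) (ω : Ω n),
      b n (mulda n a ω) = ((-1 : 𝕜) ^ n) • (ra n a ω - la n a ω))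
    {n : ℕ} (hn : Odd n) {ω : Ω n} (h : la n e ω + ra n e ω = ω) :
    b n (mulda n e (la n e ω - (2 : 𝕜)⁻¹ • ω)) = (2 : 𝕜)⁻¹ • ω := by
  rw [h_b, hn.neg_one_pow, map_sub, map_sub, map_smul, map_smul, h_rl, eq_sub_of_add_eq' h,
    map_sub, h_ll, he]
  match_scalars
  · field_simp
    ring
  · ring

def chernCoeff (𝕜 : Type*) [Field 𝕜] (n : ℕ) : 𝕜 :=
  (-1 : 𝕜) ^ n * ((2 * n).factorial : 𝕜) / (n.factorial : 𝕜)

theorem chernCoeff_succ [CharZero 𝕜] (n : ℕ) :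
    chernCoeff 𝕜 (n + 1) = -(2 * (2 * n + 1)) * chernCoeff 𝕜 n := by
  have h_fact : (2 * (n + 1)).factorial = (2 * n + 2) * ((2 * n + 1) * (2 * n).factorial) := by
    rw [show 2 * (n + 1) = 2 * n + 1 + 1 by ring, Nat.factorial_succ, Nat.factorial_succ]
  have hn : ((n + 1 : ℕ) : 𝕜) ≠ 0 := Nat.cast_ne_zero.mpr n.succ_ne_zero
  simp only [chernCoeff, h_fact, Nat.factorial_succ n, pow_succ]
  push_cast at hn ⊢
  field_simp

end Chern

theorem chern_character_is_a_cycle_general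
    (A : Type*) [Ring A] [Algebra ℂ A]
    (Ω : ℕ → Type*) [∀ n, AddCommGroup (Ω n)] [∀ n, Module ℂ (Ω n)]
    (ι : A →ₗ[ℂ] Ω 0) (one : Ω 0)
    (d : ∀ n, Ω n →ₗ[ℂ] Ω (n + 1))
    (b : ∀ n, Ω (n + 1) →ₗ[ℂ] Ω n)
    (mulda : ∀ n, A → Ω n →ₗ[ℂ] Ω (n + 1))
    (ra : ∀ n, A → Ω n →ₗ[ℂ] Ω n)
    (la : ∀ n, A → Ω n →ₗ[ℂ] Ω n)
    (h_ll : ∀ n (a a' : A) (ω : Ω n), la n a (la n a' ω) = la n (a' * a) ω)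
    (h_rl : ∀ n (a a' : A) (ω : Ω n), ra n a' (la n a ω) = la n a (ra n a' ω))
    (h_one_r : ∀ a : A, ra 0 a one = ι a)
    (h_one_l : ∀ a : A, la 0 a one = ι a)
    (h_d0 : ∀ a : A, d 0 (ι a) = mulda 0 a one)
    (h_d_one : d 0 one = 0)
    (h_d : ∀ n (a : A) (ω : Ω n), d (n + 1) (mulda n a ω) = mulda (n + 1) a (d n ω))
    (h_ra_mulda : ∀ n (a a' : A) (ω : Ω n),
        ra (n + 1) a' (mulda n a ω) = mulda n (a * a') ω - mulda n a' (ra n a ω))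
    (h_la_mulda : ∀ n (a a' : A) (ω : Ω n),
        la (n + 1) a' (mulda n a ω) = mulda n a (la n a' ω))
    (h_b : ∀ n (a : A) (ω : Ω n),
        b n (mulda n a ω) = ((-1 : ℂ) ^ n) • (ra n a ω - la n a ω))
    -- the Karoubi operator k = 1 - (bd + db) :
    (k : ∀ n, Ω n →ₗ[ℂ] Ω n)
    (hk : ∀ n (ω : Ω (n + 1)),
        k (n + 1) ω = ω - b (n + 1) (d (n + 1) ω) - d n (b n ω))
    -- Connes' boundary B = (1 + k + … + kⁿ) d on n-forms :
    (B : ∀ n, Ω n →ₗ[ℂ] Ω (n + 1))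
    (hB : ∀ n (ω : Ω n),
        B n ω = ∑ i ∈ Finset.range (n + 1), (⇑(k (n + 1)))^[i] (d n ω))
    -- the idempotent and the Chern character components :
    (e : A) (he : e * e = e)
    (w : ∀ m, Ω m)
    (hw0 : w 0 = ι e - ((2 : ℂ)⁻¹) • one)
    (hwsucc : ∀ m, w (m + 1) = mulda m e (w m))
    (ch : ∀ n : ℕ, Ω (2 * n))
    (hch0 : ch 0 = ι e)
    (hchsucc : ∀ n : ℕ, ch (n + 1) =
        (((-1 : ℂ) ^ (n + 1)) * ((2 * (n + 1)).factorial : ℂ) / ((n + 1).factorial : ℂ))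
          • w (2 * (n + 1))) :
    ∀ n : ℕ, b (2 * n + 1) (ch (n + 1)) + B (2 * n) (ch n) = 0 := by
  intro n
  set v := dePow one mulda e
  have parity := dePow_parity he h_one_r h_one_l h_ra_mulda h_la_mulda n
  have hd : d (2 * n) (ch n) = chernCoeff ℂ n • v (2 * n + 1) := by
    cases n with
    | zero => simp [hch0, h_d0, chernCoeff, v, dePow]
    | succ m => rw [hchsucc, map_smul, d_eq_dePow_succ hw0 hwsucc h_d0 h_d_one h_d]; rfl
  have hk_v : k (2 * n + 1) (v (2 * n + 1)) = v (2 * n + 1) :=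
    karoubi_mulda_eq_self hk h_d h_b (d_dePow h_d_one h_d _) parity.1
  have hB_ch : B (2 * n) (ch n) = (2 * n + 1) • d (2 * n) (ch n) :=
    connesB_eq_nsmul hB (by rw [hd, map_smul, hk_v])
  have hb_ch :
      b (2 * n + 1) (ch (n + 1)) = chernCoeff ℂ (n + 1) • (2 : ℂ)⁻¹ • v (2 * n + 1) := by
    rw [hchsucc, map_smul, show w (2 * (n + 1)) = _ from hwsucc (2 * n + 1),
      eq_la_dePow_sub_half hw0 hwsucc h_one_l h_la_mulda,
      b_mulda_la_sub_half he h_ll h_rl h_b (odd_two_mul_add_one n) parity.2]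
    rfl
  rw [hb_ch, hB_ch, hd, chernCoeff_succ]
  module

/-- Let `e ∈ A` be an idempotent (`e² = e`) in a unital `ℂ`-algebra.
In the universal DG algebra `ΩA` (axiomatized as before, with Hochschild operator `b`
and Connes boundary `B = (1 + k + ⋯ + kⁿ)d`), the Chern character chain with
components `ch₀ = e` and `ch_{2n} = (-1)ⁿ (2n)!/n! · (e - ½)(de de)ⁿ` for `n ≥ 1`
is a cycle for the total boundary `b + B`:
`b(ch_{2n+2}) + B(ch_{2n}) = 0` for all `n ≥ 0`.

Here `w m = (e - ½)·(de)^m` is defined recursively by `w 0 = ι e - ½·1` and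
`w (m+1) = (w m)·de`. -/
theorem chern_character_is_a_cycle
    (A : Type*) [Ring A] [Algebra ℂ A]
    (Ω : ℕ → Type*) [∀ n, AddCommGroup (Ω n)] [∀ n, Module ℂ (Ω n)]
    (ι : A →ₗ[ℂ] Ω 0) (one : Ω 0)
    (d : ∀ n, Ω n →ₗ[ℂ] Ω (n + 1))
    (b : ∀ n, Ω (n + 1) →ₗ[ℂ] Ω n)
    (mulda : ∀ n, A → Ω n →ₗ[ℂ] Ω (n + 1))
    (ra : ∀ n, A → Ω n →ₗ[ℂ] Ω n)
    (la : ∀ n, A → Ω n →ₗ[ℂ] Ω n)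
    (h_rr : ∀ n (a a' : A) (ω : Ω n), ra n a' (ra n a ω) = ra n (a * a') ω)
    (h_ll : ∀ n (a a' : A) (ω : Ω n), la n a (la n a' ω) = la n (a' * a) ω)
    (h_rl : ∀ n (a a' : A) (ω : Ω n), ra n a' (la n a ω) = la n a (ra n a' ω))
    (h_ra0 : ∀ x a : A, ra 0 a (ι x) = ι (x * a))
    (h_la0 : ∀ a x : A, la 0 a (ι x) = ι (a * x))
    (h_one_r : ∀ a : A, ra 0 a one = ι a)
    (h_one_l : ∀ a : A, la 0 a one = ι a)
    (h_d0 : ∀ a : A, d 0 (ι a) = mulda 0 a one)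
    (h_d_one : d 0 one = 0)
    (h_d : ∀ n (a : A) (ω : Ω n), d (n + 1) (mulda n a ω) = mulda (n + 1) a (d n ω))
    (h_ra_mulda : ∀ n (a a' : A) (ω : Ω n),
        ra (n + 1) a' (mulda n a ω) = mulda n (a * a') ω - mulda n a' (ra n a ω))
    (h_la_mulda : ∀ n (a a' : A) (ω : Ω n),
        la (n + 1) a' (mulda n a ω) = mulda n a (la n a' ω))
    (h_b : ∀ n (a : A) (ω : Ω n),
        b n (mulda n a ω) = ((-1 : ℂ) ^ n) • (ra n a ω - la n a ω))
    (h_span : ∀ n (η : Ω (n + 1)),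
        η ∈ Submodule.span ℂ {x : Ω (n + 1) | ∃ (a : A) (ω : Ω n), x = mulda n a ω})
    -- the Karoubi operator k = 1 - (bd + db) :
    (k : ∀ n, Ω n →ₗ[ℂ] Ω n)
    (hk0 : ∀ ω : Ω 0, k 0 ω = ω - b 0 (d 0 ω))
    (hk : ∀ n (ω : Ω (n + 1)),
        k (n + 1) ω = ω - b (n + 1) (d (n + 1) ω) - d n (b n ω))
    -- Connes' boundary B = (1 + k + … + kⁿ) d on n-forms :
    (B : ∀ n, Ω n →ₗ[ℂ] Ω (n + 1))
    (hB : ∀ n (ω : Ω n),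
        B n ω = ∑ i ∈ Finset.range (n + 1), (⇑(k (n + 1)))^[i] (d n ω))
    -- the idempotent and the Chern character components :
    (e : A) (he : e * e = e)
    (w : ∀ m, Ω m)
    (hw0 : w 0 = ι e - ((2 : ℂ)⁻¹) • one)
    (hwsucc : ∀ m, w (m + 1) = mulda m e (w m))
    (ch : ∀ n : ℕ, Ω (2 * n))
    (hch0 : ch 0 = ι e)
    (hchsucc : ∀ n : ℕ, ch (n + 1) =
        (((-1 : ℂ) ^ (n + 1)) * ((2 * (n + 1)).factorial : ℂ) / ((n + 1).factorial : ℂ))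
          • w (2 * (n + 1))) :
    ∀ n : ℕ, b (2 * n + 1) (ch (n + 1)) + B (2 * n) (ch n) = 0 :=
  chern_character_is_a_cycle_general A Ω ι one d b mulda ra la h_ll h_rl h_one_r h_one_l h_d0
    h_d_one h_d h_ra_mulda h_la_mulda h_b k hk B hB e he w hw0 hwsucc ch hch0 hchsucc
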